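/- In the trace t' produced by the transformation function, operations never overlap: whenever inv(c) occurs at position k in t', every invocation inv(a,in) occurring at an earlier position has an effect eff(a,out) also occurring before position k. -/

import Mathlib

inductive Event (T PS Op Val : Type) : Type
  | step : T → PS → Event T PS Op Val
  | effS : T → PS → Event T PS Op Val
  | inv  : Op → Val → Event T PS Op Val
  | res  : Op → Val → Event T PS Op Val
  | effO : Op → Val → Event T PS Op Val

namespace Event

variable {T PS Op Val : Type}

/-- `precedes t a b`: `a` occurs at an earlier index than `b` in the trace `t`. -/
def precedes (t : List (Event T PS Op Val)) (a b : Event T PS Op Val) : Prop :=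
  ∃ i j : ℕ, i < j ∧ t[i]? = some a ∧ t[j]? = some b

/-- Program events: program steps and their effects. -/
def IsProgEvent : Event T PS Op Val → Prop
  | step _ _ => True
  | effS _ _ => True
  | _ => False

/-- Invocation or response event. -/
def isIR : Event T PS Op Val → Bool
  | inv _ _ => true
  | res _ _ => true
  | _ => false

/-- Restriction of a trace to its invocation and response events. -/
def restrictIR (t : List (Event T PS Op Val)) : List (Event T PS Op Val) := t.filter isIR

/-- Well-formedness of traces: invocations precede matching responses and effects,
program steps precede their effects, and response/effect outputs agree. -/
def WellFormed (t : List (Event T PS Op Val)) : Prop :=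
  (∀ (j : ℕ) a out, (t[j]? = some (res a out) ∨ t[j]? = some (effO a out)) →
      ∃ i inp, i < j ∧ t[i]? = some (inv a inp)) ∧
  (∀ (j : ℕ) τ p, t[j]? = some (effS τ p) → ∃ i, i < j ∧ t[i]? = some (step τ p)) ∧
  (∀ a outr oute, res a outr ∈ t → effO a oute ∈ t → outr = oute)

/-- `ext t`: the extensions of trace `t` by a sequence of response events. -/
def ext (t : List (Event T PS Op Val)) : Set (List (Event T PS Op Val)) :=
  {u | ∃ tr, u = t ++ tr ∧ (∀ e ∈ tr, ∃ c v, e = res c v) ∧ u.Nodup}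

open Classical in
/-- `comp t` removes from `t` every invocation with neither a later response
nor a later operation effect. -/
noncomputable def comp : List (Event T PS Op Val) → List (Event T PS Op Val)
  | [] => []
  | e :: rest =>
    if ∃ a inp, e = inv a inp ∧ ∀ out, res a out ∉ rest ∧ effO a out ∉ rest
    then comp rest
    else e :: comp rest

/-- `Allows R t` : the (partial) order `R` allows the trace `t`. -/
def Allows (R : Event T PS Op Val → Event T PS Op Val → Prop)
    (t : List (Event T PS Op Val)) : Prop :=
  ∀ a b, R a b → b ∈ t → precedes t a b

/-- The operation order `⪯_t`: pairs `(res c, inv d)` with the response before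
the invocation in `t`. -/
def OpOrd (t : List (Event T PS Op Val)) (e e' : Event T PS Op Val) : Prop :=
  (∃ c v, e = res c v) ∧ (∃ d w, e' = inv d w) ∧ precedes t e e'

/-- Atomic history: every invocation is immediately followed by its response and
every response immediately preceded by its invocation. -/
def Atomic (h : List (Event T PS Op Val)) : Prop :=
  (∀ i a inp, h[i]? = some (inv a inp) → ∃ out, h[i + 1]? = some (res a out)) ∧
  (∀ i a out, h[i]? = some (res a out) → ∃ j inp, i = j + 1 ∧ h[j]? = some (inv a inp))

/-- The thread of an object event (invocation or response), if any. -/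
def objThread (thread : Op → T) : Event T PS Op Val → Option T
  | inv o _ => some (thread o)
  | res o _ => some (thread o)
  | _ => none

/-- Thread equivalence: equal per-thread subsequences of invocations and responses. -/
def threadEquiv [DecidableEq T] (thread : Op → T) (t h : List (Event T PS Op Val)) : Prop :=
  ∀ τ : T, t.filter (fun e => decide (objThread thread e = some τ)) =
           h.filter (fun e => decide (objThread thread e = some τ))

open Classical in
/-- The transformation function `trans` of the soundness proof (cases (T1)–(T5)). -/
noncomputable def trans : List (Event T PS Op Val) → List (Event T PS Op Val) →
    List (Event T PS Op Val) → List (Event T PS Op Val)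
  | t, h', r =>
    if h5 : ∃ a inp out, h'.head? = some (inv a inp) ∧ inv a inp ∈ r ∧ res a out ∈ t then
      -- (T5)
      let a := h5.choose
      let inp := h5.choose_spec.choose
      let out := h5.choose_spec.choose_spec.choose
      inv a inp :: effO a out :: res a out ::
        trans t h'.tail.tail (r.eraseP (fun e => decide (e = inv a inp)))
    else
      match t with
      | [] => []
      | .inv a inp :: ts =>
          if h1 : h'.head? = some (inv a inp) ∧ ∃ out, res a out ∈ (inv a inp :: ts) then
            -- (T1)
            inv a inp :: effO a h1.2.choose :: res a h1.2.choose ::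
              trans ts h'.tail.tail r
          else
            -- (T2)
            trans ts h' (r ++ [inv a inp])
      | .res _ _ :: ts => trans ts h' r        -- (T3)
      | .effO _ _ :: ts => trans ts h' r       -- (T3)
      | .step s p :: ts => step s p :: trans ts h' r   -- (T4)
      | .effS s p :: ts => effS s p :: trans ts h' r   -- (T4)
  termination_by t h' r => t.length + h'.length
  decreasing_by
    · obtain ⟨a, inp, out, hh, -, -⟩ := h5
      have hne : h' ≠ [] := by intro hcon; subst hcon; simp at hh
      have h0 : 0 < h'.length := List.length_pos_iff.mpr hne
      simp_wf
      omega
    all_goals simp_wf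
    all_goals omega

/-- Atomic-style traces: blocks `[inv a in, eff a out, res a out]` interleaved with
program events, each operation appearing in exactly one block. -/
inductive AtomicStyle : List (Event T PS Op Val) → Prop
  | nil : AtomicStyle []
  | prog {e : Event T PS Op Val} {t : List (Event T PS Op Val)} :
      IsProgEvent e → AtomicStyle t → AtomicStyle (e :: t)
  | block {a : Op} {inp out : Val} {t : List (Event T PS Op Val)} :
      (∀ v : Val, inv a v ∉ t ∧ res a v ∉ t ∧ effO a v ∉ t) →
      AtomicStyle t →
      AtomicStyle (inv a inp :: effO a out :: res a out :: t)

/-! Only rules (T1) and (T5) emit invocations, each as a block `inv a in, eff a out, res a out`,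
so every invocation in `trans t h' r` is immediately followed by an effect of the same
operation. An invocation at `i < k` thus has its effect at `i + 1`, and `i + 1 ≠ k` because
position `k` holds an invocation. -/

def InvFollowedByEffO (l : List (Event T PS Op Val)) : Prop :=
  ∀ k a v, l[k]? = some (inv a v) → ∃ out, l[k + 1]? = some (effO a out)

namespace InvFollowedByEffO

theorem nil : InvFollowedByEffO ([] : List (Event T PS Op Val)) := by
  simp [InvFollowedByEffO]

theorem cons {e : Event T PS Op Val} {l : List (Event T PS Op Val)}
    (he : ∀ a v, e ≠ inv a v) (hl : InvFollowedByEffO l) : InvFollowedByEffO (e :: l)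
  | 0, a, v, h => absurd (Option.some.inj h) (he a v)
  | k + 1, a, v, h => hl k a v h

theorem inv_effO_cons {a : Op} {inp out : Val} {l : List (Event T PS Op Val)}
    (hl : InvFollowedByEffO l) : InvFollowedByEffO (inv a inp :: effO a out :: l)
  | 0, b, v, h => by
    obtain ⟨rfl, -⟩ := inv.inj (Option.some.inj h).symm
    exact ⟨out, rfl⟩
  | k + 1, b, v, h => (cons (fun _ _ => nomatch ·) hl) k b v h

theorem block {a : Op} {inp out : Val} {l : List (Event T PS Op Val)}
    (hl : InvFollowedByEffO l) : InvFollowedByEffO (inv a inp :: effO a out :: res a out :: l) :=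
  inv_effO_cons (cons (fun _ _ => nomatch ·) hl)

theorem exists_effO_lt {l : List (Event T PS Op Val)} (hl : InvFollowedByEffO l)
    {k i : ℕ} {c a : Op} {cv ain : Val} (hk : l[k]? = some (inv c cv)) (hik : i < k)
    (hi : l[i]? = some (inv a ain)) : ∃ out j, j < k ∧ l[j]? = some (effO a out) := by
  obtain ⟨out, hout⟩ := hl i a ain hi
  refine ⟨out, i + 1, lt_of_le_of_ne hik fun hk' => ?_, hout⟩
  rw [hk', hk] at hout
  cases hout

end InvFollowedByEffO

theorem invFollowedByEffO_trans (t h' r : List (Event T PS Op Val)) :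
    InvFollowedByEffO (trans t h' r) := by
  fun_induction trans t h' r
  case case2 => exact .nil
  case case1 | case3 => exact .block ‹_›
  case case4 | case5 | case6 => assumption
  case case7 | case8 => exact .cons (fun _ _ => nomatch ·) ‹_›

end Event

/-- In the trace produced by `trans`, operations never overlap:
whenever an invocation occurs at position `k`, every invocation occurring at an
earlier position has an effect also occurring before position `k`. -/
theorem stmt16 {T PS Op Val : Type}
    (t h' : List (Event T PS Op Val)) :
    ∀ (k : ℕ) (c : Op) (cv : Val),
      (Event.trans t h' [])[k]? = some (Event.inv c cv) →
      ∀ (i : ℕ) (a : Op) (ain : Val), i < k →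
        (Event.trans t h' [])[i]? = some (Event.inv a ain) →
        ∃ (out : Val) (j : ℕ), j < k ∧
          (Event.trans t h' [])[j]? = some (Event.effO a out) :=
  fun _ _ _ hk _ _ _ hik hi => (Event.invFollowedByEffO_trans t h' []).exists_effO_lt hk hik hi
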